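/- arXiv:2407.04358 — 2 statements merged into one kernel-verified Lean document; each statement's English description precedes it below -/
import Mathlib

section
/- Let g : ℝ^d → ℝ be non-negative, differentiable, L-smooth and convex, let g* = inf_y g(y), let x ∈ ℝ^d with g(x) > 0, let σ > 0, and let γ = σ / (1 + (σ/(2 g(x))) ‖∇g(x)‖²) be the NGN stepsize. Then γ² ‖∇g(x)‖² ≤ (4σL/(1 + 2σL)) γ (g(x) − g*) + (2σ²L/(1 + σL)) · max{0, (2σL − 1)/(2σL + 1)} · g*. In particular, if σ ≤ 1/(2L) or g* = 0, the last term vanishes. -/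
open scoped RealInnerProductSpace

private lemma Pnn' (A U V : ℝ) (hU : 0 ≤ U) (hV : 0 < V) (hUA : U ≤ A * V) (hq : 1 ≤ 2 * A) :
    0 ≤ (2*A-1)*(A*V-U)*(V+U)^2 - (1+A)*U*((2*A-1)*V-2*U)*V := by
  nlinarith [mul_nonneg (mul_nonneg hU (sub_nonneg.2 hUA)) (sub_nonneg.2 hq),
    sq_nonneg (U - A*V), mul_nonneg hU hU,
    mul_nonneg (sub_nonneg.2 hUA) (sub_nonneg.2 hq),
    mul_nonneg hU (sub_nonneg.2 hq), sq_nonneg (A*V - U - V),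
    mul_nonneg (mul_nonneg hU hU) (sub_nonneg.2 hUA),
    mul_pos hV hV, mul_nonneg hU hV.le, mul_nonneg (sub_nonneg.2 hUA) hV.le,
    mul_nonneg (mul_nonneg (mul_nonneg hU (sub_nonneg.2 hUA)) (sub_nonneg.2 hq)) hV.le,
    mul_nonneg (mul_nonneg (mul_nonneg hU hU) (sub_nonneg.2 hUA)) hV.le,
    mul_nonneg (mul_nonneg hU hV.le) hV.le,
    mul_nonneg (mul_nonneg (sub_nonneg.2 hUA) hV.le) hV.le,
    mul_nonneg (mul_nonneg (mul_nonneg hU (sub_nonneg.2 hq)) hV.le) hV.le]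

set_option maxHeartbeats 1000000 in
private lemma ngn_algebra (f K gs σ L : ℝ) (hf : 0 < f) (hK : 0 ≤ K) (hgs : 0 ≤ gs)
    (hgsf : gs ≤ f) (hkey : K ≤ 2 * L * (f - gs)) (hL : 0 < L) (hσ : 0 < σ) :
    (σ / (1 + σ / (2 * f) * K)) ^ 2 * K ≤
      4 * σ * L / (1 + 2 * σ * L) * (σ / (1 + σ / (2 * f) * K)) * (f - gs)
        + 2 * σ ^ 2 * L / (1 + σ * L) * max 0 ((2 * σ * L - 1) / (2 * σ * L + 1)) * gs := by
  have hE : (0:ℝ) < 2 * f + σ * K := by positivity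
  have h12 : (0:ℝ) < 1 + 2 * σ * L := by positivity
  have h1s : (0:ℝ) < 1 + σ * L := by positivity
  have hKf : K ≤ 2 * L * f := by nlinarith
  have hD : (0:ℝ) < 1 + σ / (2 * f) * K := by positivity
  rcases le_or_gt (2 * σ * L) 1 with hc | hc
  · have hm : max 0 ((2 * σ * L - 1) / (2 * σ * L + 1)) = 0 :=
      max_eq_left (div_nonpos_of_nonpos_of_nonneg (by linarith) (by linarith))
    rw [hm, mul_zero, zero_mul, add_zero]
    have hN : 0 ≤ 8 * L * f * (f - gs) * (2 * f + σ * K) - 4 * f ^ 2 * K * (1 + 2 * σ * L) := by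
      have hsk : σ * K ≤ f - gs := by nlinarith
      nlinarith [mul_nonneg (sub_nonneg.2 hkey) hf.le,
        mul_nonneg (sub_nonneg.2 hsk) hgs,
        mul_nonneg (sub_nonneg.2 hkey) hgs,
        mul_nonneg (mul_nonneg hL.le (sub_nonneg.2 hgsf)) (sub_nonneg.2 hgsf)]
    have sub_eq : 4 * σ * L / (1 + 2 * σ * L) * (σ / (1 + σ / (2 * f) * K)) * (f - gs)
        - (σ / (1 + σ / (2 * f) * K)) ^ 2 * K
        = σ ^ 2 * (8 * L * f * (f - gs) * (2 * f + σ * K) - 4 * f ^ 2 * K * (1 + 2 * σ * L))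
            / ((1 + 2 * σ * L) * (2 * f + σ * K) ^ 2) := by
      field_simp
      ring
    nlinarith [sub_eq, div_nonneg (mul_nonneg (sq_nonneg σ) hN)
      (le_of_lt (by positivity : (0:ℝ) < (1 + 2 * σ * L) * (2 * f + σ * K) ^ 2))]
  · have hm : max 0 ((2 * σ * L - 1) / (2 * σ * L + 1)) = (2 * σ * L - 1) / (2 * σ * L + 1) :=
      max_eq_right (div_nonneg (by linarith) (by linarith))
    rw [hm]
    set N : ℝ := 8 * L * f * (f - gs) * (2 * f + σ * K) * (1 + σ * L)
        + 2 * L * (2 * σ * L - 1) * gs * (2 * f + σ * K) ^ 2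
        - 4 * f ^ 2 * K * (1 + 2 * σ * L) * (1 + σ * L) with hNdef
    have hN : 0 ≤ N := by
      rcases eq_or_lt_of_le hKf with he | hlt
      · have hgs0 : gs = 0 := le_antisymm (by nlinarith) hgs
        rw [hNdef, hgs0, he]
        nlinarith [mul_pos (mul_pos hL (pow_pos hf 3)) h1s]
      · have hTf : 0 ≤ 4 * f ^ 2 * (1 + σ * L) * (4 * L * f - K) :=
          mul_nonneg (by positivity) (by linarith)
        have hTlo : 0 ≤ 4 * f * K * (2 * f + σ * K) * (1 + σ * L)
            + (2 * σ * L - 1) * (2 * L * f - K) * (2 * f + σ * K) ^ 2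
            - 4 * f ^ 2 * K * (1 + 2 * σ * L) * (1 + σ * L) := by
          have hP := Pnn' (σ * L) (σ * K) (2 * f) (by positivity) (by positivity)
            (by nlinarith) (by linarith)
          nlinarith [hP, hσ]
        rw [hNdef]
        nlinarith [mul_nonneg (mul_nonneg hL.le hgs) hTlo,
          mul_nonneg (sub_nonneg.2 hkey) hTf, hlt]
    have sub_eq : 4 * σ * L / (1 + 2 * σ * L) * (σ / (1 + σ / (2 * f) * K)) * (f - gs)
        + 2 * σ ^ 2 * L / (1 + σ * L) * ((2 * σ * L - 1) / (2 * σ * L + 1)) * gs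
        - (σ / (1 + σ / (2 * f) * K)) ^ 2 * K
        = σ ^ 2 * N / ((2 * f + σ * K) ^ 2 * (1 + 2 * σ * L) * (1 + σ * L)) := by
      rw [hNdef]
      field_simp
      ring
    nlinarith [sub_eq, div_nonneg (mul_nonneg (sq_nonneg σ) hN)
      (le_of_lt (by positivity : (0:ℝ) < (2 * f + σ * K) ^ 2 * (1 + 2 * σ * L) * (1 + σ * L)))]

private lemma descent_lemma {d : ℕ} (g : EuclideanSpace ℝ (Fin d) → ℝ) (L : ℝ)
    (hdiff : Differentiable ℝ g)
    (hsmooth : ∀ x y, ‖gradient g x - gradient g y‖ ≤ L * ‖x - y‖)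
    (x v : EuclideanSpace ℝ (Fin d)) :
    g (x + v) ≤ g x + ⟪gradient g x, v⟫ + L / 2 * ‖v‖ ^ 2 := by
  set C := ⟪gradient g x, v⟫ with hC
  set Q := L / 2 * ‖v‖ ^ 2 with hQ
  set φ : ℝ → ℝ := fun s => g (x + s • v) - s * C - s ^ 2 * Q with hφ
  have hderiv : ∀ s : ℝ, HasDerivAt φ (⟪gradient g (x + s • v), v⟫ - C - 2 * s * Q) s := by
    intro s
    have hc : HasDerivAt (fun s : ℝ => x + s • v) v s := by
      simpa using ((hasDerivAt_id s).smul_const v).const_add x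
    have hg : HasFDerivAt g (InnerProductSpace.toDual ℝ _ (gradient g (x + s • v))) (x + s • v) :=
      hasGradientAt_iff_hasFDerivAt.mp (hdiff (x + s • v)).hasGradientAt
    have h1 : HasDerivAt (fun s : ℝ => g (x + s • v))
        (InnerProductSpace.toDual ℝ _ (gradient g (x + s • v)) v) s :=
      hg.comp_hasDerivAt s hc
    rw [InnerProductSpace.toDual_apply_apply] at h1
    have h2 : HasDerivAt (fun s : ℝ => s * C) C s := by simpa using (hasDerivAt_id s).mul_const C
    have h3 : HasDerivAt (fun s : ℝ => s ^ 2 * Q) (2 * s * Q) s := by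
      simpa using (hasDerivAt_pow 2 s).mul_const Q
    exact (h1.sub h2).sub h3
  have hφdiff : Differentiable ℝ φ := fun s => (hderiv s).differentiableAt
  have hanti : AntitoneOn φ (Set.Icc 0 1) := by
    apply antitoneOn_of_deriv_nonpos (convex_Icc 0 1) hφdiff.continuous.continuousOn
      hφdiff.differentiableOn
    intro s hs
    rw [interior_Icc, Set.mem_Ioo] at hs
    rw [(hderiv s).deriv]
    have key : ⟪gradient g (x + s • v) - gradient g x, v⟫ ≤ L * s * ‖v‖ ^ 2 := by
      calc ⟪gradient g (x + s • v) - gradient g x, v⟫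
          ≤ ‖gradient g (x + s • v) - gradient g x‖ * ‖v‖ := real_inner_le_norm _ _
        _ ≤ (L * ‖(x + s • v) - x‖) * ‖v‖ := by
            apply mul_le_mul_of_nonneg_right (hsmooth _ _) (norm_nonneg _)
        _ = L * s * ‖v‖ ^ 2 := by
            rw [show (x + s • v) - x = s • v by abel, norm_smul]
            simp [abs_of_pos hs.1]
            ring
    rw [inner_sub_left] at key
    rw [hQ]
    linarith
  have h01 := hanti (Set.left_mem_Icc.mpr zero_le_one) (Set.right_mem_Icc.mpr zero_le_one)
    zero_le_one
  simp only [hφ, zero_smul, add_zero, one_smul, zero_mul, zero_pow, sub_zero, one_mul,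
    one_pow, mul_zero] at h01
  linarith

/-- Fundamental inequality for the NGN stepsize (convex case):
`γ² ‖∇g(x)‖² ≤ (4σL/(1+2σL)) γ (g(x) − g*) + (2σ²L/(1+σL)) max{0, (2σL−1)/(2σL+1)} g*`,
and the last term vanishes when `σ ≤ 1/(2L)` or `g* = 0`. -/
theorem ngn_fundamental_inequality {d : ℕ} (g : EuclideanSpace ℝ (Fin d) → ℝ)
    (L σ γ : ℝ) (hL : 0 < L) (hσ : 0 < σ)
    (hdiff : Differentiable ℝ g)
    (hnonneg : ∀ y, 0 ≤ g y)
    (hsmooth : ∀ x y, ‖gradient g x - gradient g y‖ ≤ L * ‖x - y‖)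
    (hconv : ConvexOn ℝ Set.univ g)
    (x : EuclideanSpace ℝ (Fin d)) (hx : 0 < g x)
    (hγ : γ = σ / (1 + σ / (2 * g x) * ‖gradient g x‖ ^ 2)) :
    γ ^ 2 * ‖gradient g x‖ ^ 2 ≤
        4 * σ * L / (1 + 2 * σ * L) * γ * (g x - ⨅ y, g y)
          + 2 * σ ^ 2 * L / (1 + σ * L) * max 0 ((2 * σ * L - 1) / (2 * σ * L + 1))
            * (⨅ y, g y) ∧
      ((σ ≤ 1 / (2 * L) ∨ (⨅ y, g y) = 0) →
        γ ^ 2 * ‖gradient g x‖ ^ 2 ≤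
          4 * σ * L / (1 + 2 * σ * L) * γ * (g x - ⨅ y, g y)) := by
  have hbdd : BddBelow (Set.range g) := ⟨0, by rintro _ ⟨y, rfl⟩; exact hnonneg y⟩
  have hstar_nonneg : 0 ≤ ⨅ y, g y := le_ciInf hnonneg
  have hstar_le : (⨅ y, g y) ≤ g x := ciInf_le hbdd x
  have key : ‖gradient g x‖ ^ 2 ≤ 2 * L * (g x - ⨅ y, g y) := by
    have hd := descent_lemma g L hdiff hsmooth x (-(L⁻¹ • gradient g x))
    have h1 : ⟪gradient g x, -(L⁻¹ • gradient g x)⟫ = -(L⁻¹ * ‖gradient g x‖ ^ 2) := by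
      rw [inner_neg_right, real_inner_smul_right, real_inner_self_eq_norm_sq]
    have h2 : ‖-(L⁻¹ • gradient g x)‖ ^ 2 = L⁻¹ ^ 2 * ‖gradient g x‖ ^ 2 := by
      rw [norm_neg, norm_smul, mul_pow, Real.norm_eq_abs, sq_abs]
    rw [h1, h2] at hd
    have hd2 : g (x + -(L⁻¹ • gradient g x)) ≤ g x - ‖gradient g x‖ ^ 2 / (2 * L) := by
      have heq : -(L⁻¹ * ‖gradient g x‖ ^ 2) + L / 2 * (L⁻¹ ^ 2 * ‖gradient g x‖ ^ 2)
          = -(‖gradient g x‖ ^ 2 / (2 * L)) := by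
        field_simp
        ring
      linarith [hd, heq.ge, heq.le]
    have hinf := ciInf_le hbdd (x + -(L⁻¹ • gradient g x))
    have hdiv : 2 * L * (‖gradient g x‖ ^ 2 / (2 * L)) = ‖gradient g x‖ ^ 2 := by
      field_simp
    nlinarith [hinf, hd2, hdiv, mul_le_mul_of_nonneg_left
      (le_trans hinf hd2) (by positivity : (0:ℝ) ≤ 2 * L)]
  subst hγ
  have main := ngn_algebra (g x) (‖gradient g x‖ ^ 2) (⨅ y, g y) σ L hx (by positivity)
    hstar_nonneg hstar_le key hL hσ
  refine ⟨main, ?_⟩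
  rintro (hσL | hgs0)
  · have h2σL : 2 * σ * L ≤ 1 := by
      have := (le_div_iff₀ (by positivity : (0:ℝ) < 2 * L)).mp hσL
      nlinarith
    have hm : max 0 ((2 * σ * L - 1) / (2 * σ * L + 1)) = 0 :=
      max_eq_left (div_nonpos_of_nonpos_of_nonneg (by linarith)
        (by nlinarith [mul_pos hσ hL]))
    rw [hm] at main
    linarith [main]
  · rw [hgs0] at main ⊢
    linarith [main]
end

section
/- Let f = (1/N) Σ_{i=1}^N f_i where each f_i : ℝ^d → ℝ is non-negative, differentiable, L-smooth and convex, with f_i(x) > 0 for all i and x. Let x* be a minimizer of f, and run the stochastic NGN iteration with parameter σ > 0 from initial point x⁰ for K steps. Then the averaged iterate x̄^K = (1/K) Σ_{k=0}^{K−1} x^k satisfies E[f(x̄^K) − f(x*)] ≤ ‖x⁰ − x*‖²/(η_σ K) + 3σL(1 + σL) Δ_int + σL · max{0, 2σL − 1} · Δ_pos, where η_σ = 2σ/(1 + 2σL)². -/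
open scoped RealInnerProductSpace

/-- One step of the stochastic NGN method on component `i` with parameter `σ`. -/
noncomputable def ngnStep {d N : ℕ} (f : Fin N → EuclideanSpace ℝ (Fin d) → ℝ) (σ : ℝ)
    (i : Fin N) (x : EuclideanSpace ℝ (Fin d)) : EuclideanSpace ℝ (Fin d) :=
  x - (σ / (1 + σ / (2 * f i x) * ‖gradient (f i) x‖ ^ 2)) • gradient (f i) x

/-- Trajectory of the stochastic NGN iteration with (possibly time-varying)
parameters `σ k`, initial point `x0` and index sequence `ω`. -/
noncomputable def ngnTraj {d N : ℕ} (f : Fin N → EuclideanSpace ℝ (Fin d) → ℝ) (σ : ℕ → ℝ)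
    (x0 : EuclideanSpace ℝ (Fin d)) (ω : ℕ → Fin N) : ℕ → EuclideanSpace ℝ (Fin d)
  | 0 => x0
  | k + 1 => ngnStep f (σ k) (ω k) (ngnTraj f σ x0 ω k)

/-- Extend a finite index sequence `ω : Fin K → Fin N` to all of `ℕ` (the values beyond `K`
are irrelevant for the first `K` steps of the trajectory). -/
def extendSeq {N K : ℕ} (hN : 0 < N) (ω : Fin K → Fin N) (n : ℕ) : Fin N :=
  if h : n < K then ω ⟨n, h⟩ else ⟨0, hN⟩


section NGNAux

lemma ngn_sl (t w m u : ℝ) (ht : 0 ≤ t) (hw : 0 ≤ w) (hm : 0 ≤ m) (hu : 0 ≤ u)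
    (hc : u * w + u * m ≤ t * w) :
    (1+u)^2 * (w - (t * max 0 (2*t-1)) * m) ≤ (w - m*u) * (1+t)^2 := by
  have hum : 0 ≤ u * m := mul_nonneg hu hm
  rcases eq_or_lt_of_le hw with hw0 | hw0
  · have h1 : u * m ≤ 0 := by nlinarith
    have h2 : u * m = 0 := le_antisymm h1 hum
    have hc0 : 0 ≤ t * max 0 (2*t-1) := mul_nonneg ht (le_max_left _ _)
    nlinarith [sq_nonneg (1+u), mul_nonneg (mul_nonneg hc0 hm) (sq_nonneg (1+u))]
  · have hut : u ≤ t := by nlinarith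
    rcases le_or_gt (2*t-1) 0 with h2t | h2t
    · rw [max_eq_left h2t]
      nlinarith [mul_nonneg (mul_nonneg (sub_nonneg.2 hut) hw0.le) (by nlinarith : (0:ℝ) ≤ 1 - t - t^2 + u),
        mul_nonneg (by linarith : (0:ℝ) ≤ t*w - u*w - u*m) (sq_nonneg (1+t))]
    · rw [max_eq_right h2t.le]
      set c : ℝ := t * (2*t-1) with hcdef
      have hc0 : 0 ≤ c := mul_nonneg ht (by linarith)
      rcases le_or_gt (u*(1+t)^2) (c*(1+u)^2) with hAB | hAB
      · nlinarith [mul_nonneg hm (sub_nonneg.2 hAB),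
          mul_nonneg hw0.le (by nlinarith [sq_nonneg (1+u)] : (0:ℝ) ≤ (1+t)^2 - (1+u)^2)]
      · rcases eq_or_lt_of_le hu with hu0 | hu0
        · nlinarith [mul_nonneg hc0 hm, mul_nonneg hw0.le (by nlinarith : (0:ℝ) ≤ (1+t)^2 - 1)]
        · have h1 : u*m ≤ (t-u)*w := by linarith [hc]; 
          have hbr : c*(1+u)^2 - u*(1+t)^2 < 0 := by linarith
          have hmul : (u*m) * (c*(1+u)^2 - u*(1+t)^2) ≥ ((t-u)*w) * (c*(1+u)^2 - u*(1+t)^2) := by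
            apply mul_le_mul_of_nonpos_right h1 hbr.le
          have hid : u * ((w - m*u)*(1+t)^2 - (1+u)^2 * (w - c*m)) =
              w*u*((1+t)^2-(1+u)^2) + (u*m)*(c*(1+u)^2 - u*(1+t)^2) := by
            rw [hcdef]; ring
          have hid2 : w*u*((1+t)^2-(1+u)^2) + ((t-u)*w)*(c*(1+u)^2 - u*(1+t)^2) =
              w * ((t-u)*((2*t^2-t+1)*u^2 + (3*t^2-3*t+1)*u + (2*t^2-t))) := by
            rw [hcdef]; ring
          have hpos : 0 ≤ w * ((t-u)*((2*t^2-t+1)*u^2 + (3*t^2-3*t+1)*u + (2*t^2-t))) := by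
            apply mul_nonneg hw0.le
            apply mul_nonneg (by linarith)
            have h3 : (0:ℝ) ≤ 3*t^2-3*t+1 := by nlinarith [sq_nonneg (2*t-1)]
            nlinarith [sq_nonneg u, mul_nonneg hu h3, sq_nonneg (2*t-1)]
          have : 0 ≤ u * ((w - m*u)*(1+t)^2 - (1+u)^2 * (w - c*m)) := by
            rw [hid]; linarith [hmul, hid2 ▸ hpos]
          nlinarith [this, hu0]

variable {d : ℕ}

lemma ngn_line_deriv (φ : EuclideanSpace ℝ (Fin d) → ℝ) (hφ : Differentiable ℝ φ)
    (x v : EuclideanSpace ℝ (Fin d)) (τ : ℝ) :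
    HasDerivAt (fun r : ℝ => φ (x + r • v)) ⟪gradient φ (x + τ • v), v⟫ τ := by
  have hline : HasDerivAt (fun r : ℝ => x + r • v) v τ := by
    simpa using ((hasDerivAt_id τ).smul_const v).const_add x
  have hfd := (hφ (x + τ • v)).hasGradientAt.hasFDerivAt
  have := hfd.comp_hasDerivAt τ hline
  simpa [InnerProductSpace.toDual_apply_apply, Function.comp_def] using this

lemma ngn_descent (φ : EuclideanSpace ℝ (Fin d) → ℝ) (hφ : Differentiable ℝ φ)
    (L : ℝ) (hL : 0 < L)
    (hsmooth : ∀ x y, ‖gradient φ x - gradient φ y‖ ≤ L * ‖x - y‖)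
    (x y : EuclideanSpace ℝ (Fin d)) :
    φ y ≤ φ x + ⟪gradient φ x, y - x⟫ + L/2 * ‖y - x‖^2 := by
  set v := y - x with hv
  set g : ℝ → ℝ := fun τ => φ (x + τ • v) - τ * ⟪gradient φ x, v⟫ - τ^2 * (L/2) * ‖v‖^2
    with hg
  have hderiv : ∀ τ : ℝ, HasDerivAt g
      (⟪gradient φ (x + τ • v), v⟫ - ⟪gradient φ x, v⟫ - 2*τ*(L/2)*‖v‖^2) τ := by
    intro τ
    have h1 := ngn_line_deriv φ hφ x v τ
    have h2 : HasDerivAt (fun τ : ℝ => τ * ⟪gradient φ x, v⟫) ⟪gradient φ x, v⟫ τ := by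
      simpa using (hasDerivAt_id τ).mul_const ⟪gradient φ x, v⟫
    have h3 : HasDerivAt (fun τ : ℝ => τ^2 * (L/2) * ‖v‖^2) (2*τ*(L/2)*‖v‖^2) τ := by
      have := ((hasDerivAt_pow 2 τ).mul_const (L/2)).mul_const (‖v‖^2)
      exact this.congr_deriv (by ring)
    exact (h1.sub h2).sub h3
  have hcont : Continuous g := by
    have c1 : Continuous fun τ : ℝ => x + τ • v :=
      continuous_const.add (continuous_id.smul continuous_const)
    exact ((hφ.continuous.comp c1).sub
      (continuous_id.mul continuous_const)).sub
      (((continuous_pow 2).mul continuous_const).mul continuous_const)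
  have hanti : AntitoneOn g (Set.Icc (0:ℝ) 1) := by
    apply antitoneOn_of_hasDerivWithinAt_nonpos (convex_Icc 0 1) hcont.continuousOn
      (fun τ _ => (hderiv τ).hasDerivWithinAt)
    intro τ hτ
    rw [interior_Icc] at hτ
    have hτ0 : 0 < τ := hτ.1
    have hbound : ⟪gradient φ (x + τ • v) - gradient φ x, v⟫ ≤ L * τ * ‖v‖^2 := by
      calc ⟪gradient φ (x + τ • v) - gradient φ x, v⟫
          ≤ ‖gradient φ (x + τ • v) - gradient φ x‖ * ‖v‖ := real_inner_le_norm _ _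
        _ ≤ (L * ‖(x + τ • v) - x‖) * ‖v‖ :=
            mul_le_mul_of_nonneg_right (hsmooth _ _) (norm_nonneg _)
        _ = L * τ * ‖v‖^2 := by
            rw [add_sub_cancel_left, norm_smul, Real.norm_eq_abs, abs_of_pos hτ0]; ring
    have hsub : ⟪gradient φ (x + τ • v) - gradient φ x, v⟫
        = ⟪gradient φ (x + τ • v), v⟫ - ⟪gradient φ x, v⟫ := inner_sub_left _ _ _
    rw [hsub] at hbound
    linarith
  have h01 : g 1 ≤ g 0 := hanti (Set.mem_Icc.2 ⟨le_refl 0, zero_le_one⟩)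
    (Set.mem_Icc.2 ⟨zero_le_one, le_refl 1⟩) zero_le_one
  have hg1 : g 1 = φ y - ⟪gradient φ x, v⟫ - (L/2) * ‖v‖^2 := by
    have hxy : x + (1:ℝ) • v = y := by rw [hv]; simp
    simp only [hg, hxy, one_pow, one_mul]
  have hg0 : g 0 = φ x := by
    simp only [hg, zero_smul, add_zero, zero_mul, sub_zero, zero_pow, two_ne_zero,
      ne_eq, OfNat.ofNat_ne_zero, not_false_eq_true]
  rw [hg1, hg0] at h01
  rw [hv] at *
  linarith

lemma ngn_grad_sq_le (φ : EuclideanSpace ℝ (Fin d) → ℝ) (hφ : Differentiable ℝ φ)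
    (L : ℝ) (hL : 0 < L) (hpos : ∀ z, 0 < φ z)
    (hsmooth : ∀ x y, ‖gradient φ x - gradient φ y‖ ≤ L * ‖x - y‖)
    (x : EuclideanSpace ℝ (Fin d)) :
    ‖gradient φ x‖^2 ≤ 2 * L * (φ x - ⨅ z, φ z) := by
  have hbdd : BddBelow (Set.range φ) := ⟨0, fun r ⟨z, hz⟩ => hz ▸ (hpos z).le⟩
  set y := x - L⁻¹ • gradient φ x with hy
  have hinf : (⨅ z, φ z) ≤ φ y := ciInf_le hbdd y
  have hdes := ngn_descent φ hφ L hL hsmooth x y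
  have h1 : y - x = -(L⁻¹ • gradient φ x) := by rw [hy]; abel
  have h2 : ⟪gradient φ x, y - x⟫ = -(L⁻¹ * ‖gradient φ x‖^2) := by
    rw [h1, inner_neg_right, real_inner_smul_right, real_inner_self_eq_norm_sq]
  have h3 : ‖y - x‖^2 = L⁻¹^2 * ‖gradient φ x‖^2 := by
    rw [h1, norm_neg, norm_smul, Real.norm_eq_abs, abs_of_pos (inv_pos.2 hL), mul_pow]
  rw [h2, h3] at hdes
  have hLinv : L * L⁻¹ = 1 := mul_inv_cancel₀ (ne_of_gt hL)
  have e1 : L/2 * (L⁻¹^2 * ‖gradient φ x‖^2) = L⁻¹ * ‖gradient φ x‖^2 / 2 := by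
    field_simp
  rw [e1] at hdes
  have h6 : L⁻¹ * ‖gradient φ x‖^2 / 2 ≤ φ x - ⨅ z, φ z := by linarith
  have h7 := mul_le_mul_of_nonneg_left h6 (by linarith : (0:ℝ) ≤ 2*L)
  calc ‖gradient φ x‖^2 = 2*L*(L⁻¹ * ‖gradient φ x‖^2 / 2) := by
        field_simp
    _ ≤ 2*L*(φ x - ⨅ z, φ z) := h7

lemma ngn_convex_lb (φ : EuclideanSpace ℝ (Fin d) → ℝ) (hφ : Differentiable ℝ φ)
    (hconv : ConvexOn ℝ Set.univ φ) (x y : EuclideanSpace ℝ (Fin d)) :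
    φ x - φ y ≤ ⟪gradient φ x, x - y⟫ := by
  set ψ : ℝ → ℝ := fun τ => φ (y + τ • (x - y)) with hψ
  have heq : ∀ τ : ℝ, (AffineMap.lineMap y x : ℝ →ᵃ[ℝ] EuclideanSpace ℝ (Fin d)) τ
      = y + τ • (x - y) := by
    intro τ; rw [AffineMap.lineMap_apply]; simp [add_comm]
  have key := hconv.comp_affineMap (AffineMap.lineMap y x : ℝ →ᵃ[ℝ] EuclideanSpace ℝ (Fin d))
  rw [Set.preimage_univ] at key
  have hψconv : ConvexOn ℝ Set.univ ψ := by
    have hfe : ψ = φ ∘ ⇑(AffineMap.lineMap y x : ℝ →ᵃ[ℝ] EuclideanSpace ℝ (Fin d)) :=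
      funext fun τ => by rw [Function.comp_apply, heq τ]
    rw [hfe]; exact key
  have hd1 : HasDerivAt ψ ⟪gradient φ (y + (1:ℝ) • (x-y)), x - y⟫ 1 :=
    ngn_line_deriv φ hφ y (x - y) 1
  have hpt : y + (1:ℝ) • (x - y) = x := by simp
  rw [hpt] at hd1
  have hslope := hψconv.slope_le_deriv (Set.mem_univ (0:ℝ)) (Set.mem_univ (1:ℝ))
    zero_lt_one hd1.differentiableAt
  rw [hd1.deriv, slope_def_field] at hslope
  have h0 : ψ 0 = φ y := by simp only [hψ, zero_smul, add_zero]
  have h1 : ψ 1 = φ x := by rw [hψ]; simp only [hpt]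
  rw [h0, h1] at hslope
  simpa using hslope

lemma ngn_step_ineq {d : ℕ} (φ : EuclideanSpace ℝ (Fin d) → ℝ) (hφ : Differentiable ℝ φ)
    (hconv : ConvexOn ℝ Set.univ φ) (hpos : ∀ z, 0 < φ z) (L σ : ℝ) (hL : 0 < L) (hσ : 0 < σ)
    (hsmooth : ∀ x y, ‖gradient φ x - gradient φ y‖ ≤ L * ‖x - y‖)
    (x xstar : EuclideanSpace ℝ (Fin d)) :
    ‖(x - (σ / (1 + σ / (2 * φ x) * ‖gradient φ x‖ ^ 2)) • gradient φ x) - xstar‖^2 ≤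
      ‖x - xstar‖^2 - (2*σ/(1+σ*L)^2) * (φ x - ⨅ z, φ z)
        + (2*σ/(1+σ*L)^2) * (σ*L*max 0 (2*σ*L-1)) * (⨅ z, φ z)
        + 2*σ*(φ xstar - ⨅ z, φ z) := by
  have hbdd : BddBelow (Set.range φ) := ⟨0, fun r ⟨z, hz⟩ => hz ▸ (hpos z).le⟩
  set G := gradient φ x with hG
  set a := φ x with ha_def
  set s := ‖G‖^2 with hs_def
  set m := ⨅ z, φ z with hm_def
  set b := φ xstar with hb_def
  set t := σ*L with ht_def
  set u := σ / (2 * a) * s with hu_def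
  set γ := σ / (1 + u) with hγ_def
  have ha : 0 < a := hpos x
  have hs : 0 ≤ s := sq_nonneg _
  have hu0 : 0 ≤ u := by
    apply mul_nonneg (div_nonneg hσ.le (by linarith)) hs
  have h1u : (0:ℝ) < 1 + u := by linarith
  have hγpos : 0 < γ := div_pos hσ h1u
  have hγσ : γ ≤ σ := by
    rw [hγ_def]; exact div_le_self hσ.le (by linarith)
  have hm0 : 0 ≤ m := le_ciInf fun z => (hpos z).le
  have hma : m ≤ a := ciInf_le hbdd x
  have hmb : m ≤ b := ciInf_le hbdd xstar
  have ht0 : 0 < t := mul_pos hσ hL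
  have h1t : (0:ℝ) < 1 + t := by linarith
  have hgs : s ≤ 2*L*(a - m) := ngn_grad_sq_le φ hφ L hL hpos hsmooth x
  have hinner : a - b ≤ ⟪G, x - xstar⟫ := ngn_convex_lb φ hφ hconv x xstar
  -- norm expansion
  have hexp : ‖(x - γ • G) - xstar‖^2 = ‖x - xstar‖^2 - 2*(γ*⟪G, x - xstar⟫) + γ^2*s := by
    rw [sub_right_comm, norm_sub_sq_real, real_inner_smul_right, real_inner_comm,
      norm_smul, Real.norm_eq_abs, mul_pow, sq_abs]
  -- s in terms of u
  have hsu : σ * s = 2*a*u := by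
    rw [hu_def]; field_simp
  -- key identity
  have hkey : -(2*γ)*(a-m) + γ^2*s = -(2*σ)*((a-m) - m*u)/(1+u)^2 := by
    rw [hγ_def]
    rw [div_pow]
    field_simp
    linear_combination σ * hsu + ((σ^2 - σ) * ‖G‖^2) * (mul_inv_cancel₀ ha.ne')
  -- SL application
  have hslc : u * (a-m) + u * m ≤ t * (a-m) := by
    have : u * a = σ * s / 2 := by rw [hu_def]; field_simp
    nlinarith [hgs, hσ]
  have hsl := ngn_sl t (a-m) m u ht0.le (by linarith) hm0 hu0 hslc
  set c := t * max 0 (2*t-1) with hc_def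
  have hratio : ((a-m) - c*m)/(1+t)^2 ≤ ((a-m) - m*u)/(1+u)^2 := by
    rw [div_le_div_iff₀ (by positivity) (by positivity)]
    linarith [hsl]
  -- combine
  have hstep1 : -(2*γ)*⟪G, x - xstar⟫ ≤ -(2*γ)*(a-b) := by
    have := mul_le_mul_of_nonneg_left hinner (by linarith : (0:ℝ) ≤ 2*γ)
    linarith
  have hstep2 : 2*γ*(b-m) ≤ 2*σ*(b-m) := by
    apply mul_le_mul_of_nonneg_right (by linarith) (by linarith)
  have hstep3 : -(2*σ)*((a-m) - m*u)/(1+u)^2 ≤ -(2*σ)*((a-m) - c*m)/(1+t)^2 := by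
    rw [neg_mul, neg_div, neg_mul, neg_div, neg_le_neg_iff, mul_div_assoc, mul_div_assoc]
    exact mul_le_mul_of_nonneg_left hratio (by linarith)
  have hfin : -(2*γ)*(a-b) + γ^2*s ≤
      -(2*σ/(1+t)^2) * (a-m) + (2*σ/(1+t)^2)*c*m + 2*σ*(b-m) := by
    have e1 : -(2*γ)*(a-b) + γ^2*s = (-(2*γ)*(a-m) + γ^2*s) + 2*γ*(b-m) := by ring
    have e2 : -(2*σ)*((a-m) - c*m)/(1+t)^2 = -(2*σ/(1+t)^2) * (a-m) + (2*σ/(1+t)^2)*c*m := by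
      ring
    rw [e1]
    calc (-(2*γ)*(a-m) + γ^2*s) + 2*γ*(b-m)
        = -(2*σ)*((a-m) - m*u)/(1+u)^2 + 2*γ*(b-m) := by rw [hkey]
      _ ≤ -(2*σ)*((a-m) - c*m)/(1+t)^2 + 2*σ*(b-m) := by
          have := hstep3; linarith [hstep2]
      _ = -(2*σ/(1+t)^2) * (a-m) + (2*σ/(1+t)^2)*c*m + 2*σ*(b-m) := by rw [e2]
  calc ‖(x - γ • G) - xstar‖^2 = ‖x - xstar‖^2 - 2*(γ*⟪G, x - xstar⟫) + γ^2*s := hexp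
    _ ≤ ‖x - xstar‖^2 + (-(2*γ)*(a-b) + γ^2*s) := by linarith [hstep1]
    _ ≤ ‖x - xstar‖^2 + (-(2*σ/(1+t)^2) * (a-m) + (2*σ/(1+t)^2)*c*m + 2*σ*(b-m)) := by
        linarith [hfin]
    _ = ‖x - xstar‖^2 - (2*σ/(1+t)^2) * (a - m) + (2*σ/(1+t)^2) * (t * max 0 (2*σ*L-1)) * m
          + 2*σ*(b-m) := by
        rw [hc_def, show (2*t-1:ℝ) = 2*σ*L-1 from by rw [ht_def]; ring]; ring

lemma ngn_traj_congr {d N : ℕ} (f : Fin N → EuclideanSpace ℝ (Fin d) → ℝ) (σs : ℕ → ℝ)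
    (x0 : EuclideanSpace ℝ (Fin d)) (ω ω' : ℕ → Fin N) :
    ∀ k, (∀ j, j < k → ω j = ω' j) → ngnTraj f σs x0 ω k = ngnTraj f σs x0 ω' k
  | 0, _ => rfl
  | (k+1), h => by
      simp only [ngnTraj]
      rw [ngn_traj_congr f σs x0 ω ω' k (fun j hj => h j (Nat.lt_succ_of_lt hj)),
        h k (Nat.lt_succ_self k)]

lemma ngn_rearrange {d N K : ℕ} (hN : 0 < N) (f : Fin N → EuclideanSpace ℝ (Fin d) → ℝ)
    (σ : ℝ) (x0 : EuclideanSpace ℝ (Fin d)) (φ : EuclideanSpace ℝ (Fin d) → ℝ)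
    (k : ℕ) (hk : k < K) :
    (N:ℝ) * ∑ ω : Fin K → Fin N, φ (ngnTraj f (fun _ => σ) x0 (extendSeq hN ω) (k+1)) =
      ∑ ω : Fin K → Fin N, ∑ j : Fin N,
        φ (ngnStep f σ j (ngnTraj f (fun _ => σ) x0 (extendSeq hN ω) k)) := by
  classical
  set T : (Fin K → Fin N) → EuclideanSpace ℝ (Fin d) :=
    fun ω => ngnTraj f (fun _ => σ) x0 (extendSeq hN ω) k with hT
  set i0 : Fin K := ⟨k, hk⟩ with hi0
  set e := Equiv.funSplitAt i0 (Fin N) with he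
  have hcoordk : ∀ ω : Fin K → Fin N, extendSeq hN ω k = ω i0 := by
    intro ω; rw [extendSeq, dif_pos hk]
  have hcoord : ∀ (v : Fin N) (r : {j // j ≠ i0} → Fin N), (e.symm (v, r)) i0 = v := by
    intro v r
    simp [he, Equiv.funSplitAt, Equiv.piSplitAt]
  have hinv : ∀ (v v' : Fin N) (r : {j // j ≠ i0} → Fin N),
      T (e.symm (v, r)) = T (e.symm (v', r)) := by
    intro v v' r
    apply ngn_traj_congr
    intro j hj
    rcases lt_or_ge j K with hjK | hjK
    · have hne : (⟨j, hjK⟩ : Fin K) ≠ i0 := by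
        simp only [hi0, ne_eq, Fin.mk.injEq]
        omega
      rw [extendSeq, dif_pos hjK, extendSeq, dif_pos hjK]
      simp [he, Equiv.funSplitAt, Equiv.piSplitAt, dif_neg hne]
    · rw [extendSeq, dif_neg (by omega), extendSeq, dif_neg (by omega)]
  have hsucc : ∀ ω : Fin K → Fin N,
      ngnTraj f (fun _ => σ) x0 (extendSeq hN ω) (k+1)
        = ngnStep f σ ((extendSeq hN ω) k) (T ω) := fun ω => rfl
  set v0 : Fin N := ⟨0, hN⟩ with hv0
  set Y : ({j // j ≠ i0} → Fin N) → EuclideanSpace ℝ (Fin d) :=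
    fun r => T (e.symm (v0, r)) with hY
  -- LHS
  have hL : ∑ ω : Fin K → Fin N, φ (ngnTraj f (fun _ => σ) x0 (extendSeq hN ω) (k+1))
      = ∑ r : {j // j ≠ i0} → Fin N, ∑ v : Fin N, φ (ngnStep f σ v (Y r)) := by
    rw [← Equiv.sum_comp e.symm
      (fun ω => φ (ngnTraj f (fun _ => σ) x0 (extendSeq hN ω) (k+1)))]
    rw [Fintype.sum_prod_type]
    rw [Finset.sum_comm]
    apply Finset.sum_congr rfl
    intro r _
    apply Finset.sum_congr rfl
    intro v _
    rw [hsucc, hcoordk, hcoord, hinv v v0 r]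
  -- RHS
  have hR : ∑ ω : Fin K → Fin N, ∑ j : Fin N, φ (ngnStep f σ j (T ω))
      = (N:ℝ) * ∑ r : {j // j ≠ i0} → Fin N, ∑ v : Fin N, φ (ngnStep f σ v (Y r)) := by
    rw [← Equiv.sum_comp e.symm (fun ω => ∑ j : Fin N, φ (ngnStep f σ j (T ω)))]
    rw [Fintype.sum_prod_type]
    have : ∀ v : Fin N, ∑ r : {j // j ≠ i0} → Fin N, ∑ j : Fin N, φ (ngnStep f σ j (T (e.symm (v, r))))
        = ∑ r : {j // j ≠ i0} → Fin N, ∑ j : Fin N, φ (ngnStep f σ j (Y r)) := by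
      intro v
      apply Finset.sum_congr rfl
      intro r _
      rw [hinv v v0 r]
    rw [Finset.sum_congr rfl (fun v _ => this v)]
    rw [Finset.sum_const, Finset.card_univ, Fintype.card_fin, nsmul_eq_mul]
  rw [hL, hR]

lemma ngn_convexOn_finsum {d N : ℕ} (f : Fin N → EuclideanSpace ℝ (Fin d) → ℝ)
    (h : ∀ i, ConvexOn ℝ Set.univ (f i)) (s : Finset (Fin N)) :
    ConvexOn ℝ Set.univ (fun z => ∑ i ∈ s, f i z) := by
  classical
  induction s using Finset.induction_on with
  | empty => simpa using convexOn_const (0:ℝ) convex_univ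
  | @insert a s ha ih =>
      have := (h a).add ih
      simpa [Finset.sum_insert ha, Pi.add_def] using this

end NGNAux

set_option maxHeartbeats 1000000 in
/-- Convergence of stochastic NGN in the convex case.  The expectation
over the i.i.d. uniform index sequence is written as the average over all
`ω : Fin K → Fin N`, and `x̄^K = (1/K) Σ_{k<K} x^k`. -/
theorem ngn_stochastic_convex_rate {d N K : ℕ} (hN : 0 < N) (hK : 0 < K)
    (f : Fin N → EuclideanSpace ℝ (Fin d) → ℝ) (L σ : ℝ) (hL : 0 < L) (hσ : 0 < σ)
    (hdiff : ∀ i, Differentiable ℝ (f i))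
    (hpos : ∀ i x, 0 < f i x)
    (hsmooth : ∀ i x y, ‖gradient (f i) x - gradient (f i) y‖ ≤ L * ‖x - y‖)
    (hconv : ∀ i, ConvexOn ℝ Set.univ (f i))
    (fbar : EuclideanSpace ℝ (Fin d) → ℝ)
    (hfbar : ∀ z, fbar z = (N : ℝ)⁻¹ * ∑ i, f i z)
    (x0 xstar : EuclideanSpace ℝ (Fin d))
    (hmin : ∀ y, fbar xstar ≤ fbar y) :
    (1 / (N : ℝ) ^ K) *
        ∑ ω : Fin K → Fin N,
          (fbar ((K : ℝ)⁻¹ •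
              ∑ k ∈ Finset.range K, ngnTraj f (fun _ => σ) x0 (extendSeq hN ω) k)
            - fbar xstar) ≤
      ‖x0 - xstar‖ ^ 2 / (2 * σ / (1 + 2 * σ * L) ^ 2 * K)
        + 3 * σ * L * (1 + σ * L) * ((N : ℝ)⁻¹ * ∑ i, (f i xstar - ⨅ y, f i y))
        + σ * L * max 0 (2 * σ * L - 1) * ((N : ℝ)⁻¹ * ∑ i, ⨅ y, f i y) := by
  classical
  set m : Fin N → ℝ := fun i => ⨅ y, f i y with hm
  set η' : ℝ := 2*σ/(1+σ*L)^2 with hη'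
  set cc : ℝ := σ*L*max 0 (2*σ*L-1) with hcc
  have hNR : (0:ℝ) < (N:ℝ) := Nat.cast_pos.mpr hN
  have hKR : (0:ℝ) < (K:ℝ) := Nat.cast_pos.mpr hK
  have hNKR : (0:ℝ) < (N:ℝ)^K := by positivity
  have h1t : (0:ℝ) < 1 + σ*L := by positivity
  have hη'pos : 0 < η' := by rw [hη']; positivity
  have hcc0 : 0 ≤ cc := by rw [hcc]; positivity
  have hbdd : ∀ i, BddBelow (Set.range (f i)) :=
    fun i => ⟨0, fun r ⟨z, hz⟩ => hz ▸ (hpos i z).le⟩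
  have hmle : ∀ i y, m i ≤ f i y := fun i y => ciInf_le (hbdd i) y
  have hm0 : ∀ i, 0 ≤ m i := fun i => le_ciInf fun z => (hpos i z).le
  have hNfbar : ∀ z, (N:ℝ) * fbar z = ∑ i, f i z := by
    intro z; rw [hfbar]; field_simp
  set A : ℝ := ∑ i, (f i xstar - m i) with hA
  set M : ℝ := ∑ i, m i with hM
  set EN : ℝ := η'*(3*(σ*L)*(1+σ*L)) * A + η'*cc*M with hEN
  have hAnn : 0 ≤ A :=
    Finset.sum_nonneg fun i _ => sub_nonneg.2 (hmle i xstar)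
  have hMnn : 0 ≤ M := Finset.sum_nonneg fun i _ => hm0 i
  have hcoef : 2*σ - η' ≤ η'*(3*(σ*L)*(1+σ*L)) := by
    have he : η' * (1+σ*L)^2 = 2*σ := div_mul_cancel₀ _ (by positivity)
    nlinarith [he, mul_nonneg hη'pos.le (show (0:ℝ) ≤ σ*L*(1+2*σ*L) by positivity)]
  -- generic sum expansion
  have expand : ∀ (c0 c1 c2 c3 : ℝ) (g1 g2 g3 : Fin N → ℝ),
      ∑ j : Fin N, (c0 + c1 * g1 j + c2 * g2 j + c3 * g3 j)
        = (N:ℝ)*c0 + c1 * ∑ j, g1 j + c2 * ∑ j, g2 j + c3 * ∑ j, g3 j := by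
    intro c0 c1 c2 c3 g1 g2 g3
    rw [Finset.sum_add_distrib, Finset.sum_add_distrib, Finset.sum_add_distrib,
      ← Finset.mul_sum, ← Finset.mul_sum, ← Finset.mul_sum,
      Finset.sum_const, Finset.card_univ, Fintype.card_fin, nsmul_eq_mul]
  -- pointwise averaged inequality
  have hpt : ∀ y : EuclideanSpace ℝ (Fin d),
      ∑ j : Fin N, ‖ngnStep f σ j y - xstar‖^2 ≤
        (N:ℝ)*‖y-xstar‖^2 - η'*((N:ℝ)*(fbar y - fbar xstar)) + EN := by
    intro y
    have h1 : ∀ j : Fin N, ‖ngnStep f σ j y - xstar‖^2 ≤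
        ‖y - xstar‖^2 + (-η')*(f j y - m j) + (η'*cc)*(m j) + (2*σ)*(f j xstar - m j) := by
      intro j
      have := ngn_step_ineq (f j) (hdiff j) (hconv j) (hpos j) L σ hL hσ (hsmooth j) y xstar
      have h2 : ‖ngnStep f σ j y - xstar‖^2 ≤
          ‖y - xstar‖^2 - η'*(f j y - m j) + η'*cc*(m j) + 2*σ*(f j xstar - m j) := by
        simpa [ngnStep, hη', hcc, hm] using this
      linarith [h2]
    have h2 := Finset.sum_le_sum (fun j (_ : j ∈ Finset.univ) => h1 j)
    rw [expand] at h2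
    have h3 : (N:ℝ) * fbar y = ∑ j, f j y := hNfbar y
    have h4 : (N:ℝ) * fbar xstar = ∑ j, f j xstar := hNfbar xstar
    have h5 : ∑ j : Fin N, (f j y - m j) = (∑ j, f j y) - M := by
      rw [Finset.sum_sub_distrib, hM]
    have h6 : ∑ j : Fin N, (f j xstar - m j) = A := rfl
    rw [h5, h6] at h2
    have h7 := mul_le_mul_of_nonneg_right hcoef hAnn
    calc ∑ j : Fin N, ‖ngnStep f σ j y - xstar‖^2
        ≤ (N:ℝ)*‖y-xstar‖^2 + (-η')*((∑ j, f j y) - M) + (η'*cc)*M + (2*σ)*A := h2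
      _ ≤ (N:ℝ)*‖y-xstar‖^2 - η'*((N:ℝ)*(fbar y - fbar xstar)) + EN := by
          rw [hEN]
          have h8 : (N:ℝ)*(fbar y - fbar xstar) = (∑ j, f j y) - ∑ j, f j xstar := by
            rw [mul_sub, h3, h4]
          rw [h8]
          have h9 : (∑ j : Fin N, f j xstar) = A + M := by
            rw [hA, hM, ← Finset.sum_add_distrib]
            exact Finset.sum_congr rfl fun i _ => by ring
          rw [h9]
          nlinarith [h7]
  -- trajectory sums
  set T : ℕ → (Fin K → Fin N) → EuclideanSpace ℝ (Fin d) :=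
    fun k ω => ngnTraj f (fun _ => σ) x0 (extendSeq hN ω) k with hT
  set S : ℕ → ℝ := fun k => ∑ ω : Fin K → Fin N, ‖T k ω - xstar‖^2 with hS
  set Fs : ℕ → ℝ := fun k => ∑ ω : Fin K → Fin N, (fbar (T k ω) - fbar xstar) with hFs
  have hcard : (Finset.univ : Finset (Fin K → Fin N)).card = N^K := by
    rw [Finset.card_univ, Fintype.card_fun, Fintype.card_fin, Fintype.card_fin]
  have hstep : ∀ k, k < K →
      (N:ℝ) * S (k+1) ≤ (N:ℝ) * S k - η'*((N:ℝ)*Fs k) + (N:ℝ)^K * EN := by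
    intro k hk
    have hre := ngn_rearrange hN f σ x0 (fun y => ‖y - xstar‖^2) k hk
    have h4 : ∑ ω : Fin K → Fin N, ∑ j : Fin N, ‖ngnStep f σ j (T k ω) - xstar‖^2
        ≤ ∑ ω : Fin K → Fin N, ((N:ℝ)*‖T k ω - xstar‖^2
            - η'*((N:ℝ)*(fbar (T k ω) - fbar xstar)) + EN) :=
      Finset.sum_le_sum (fun ω _ => hpt (T k ω))
    have h5 : ∑ ω : Fin K → Fin N, ((N:ℝ)*‖T k ω - xstar‖^2
          - η'*((N:ℝ)*(fbar (T k ω) - fbar xstar)) + EN)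
        = (N:ℝ) * S k - η'*((N:ℝ)*Fs k) + (N:ℝ)^K * EN := by
      rw [Finset.sum_add_distrib, Finset.sum_sub_distrib, ← Finset.mul_sum,
        Finset.sum_const, hcard, nsmul_eq_mul, Nat.cast_pow]
      rw [hS, hFs]
      have : ∑ ω : Fin K → Fin N, η' * ((N:ℝ) * (fbar (T k ω) - fbar xstar))
          = η' * ((N:ℝ) * ∑ ω : Fin K → Fin N, (fbar (T k ω) - fbar xstar)) := by
        rw [Finset.mul_sum, Finset.mul_sum]
      rw [this]
    calc (N:ℝ) * S (k+1)
        = ∑ ω : Fin K → Fin N, ∑ j : Fin N, ‖ngnStep f σ j (T k ω) - xstar‖^2 := hre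
      _ ≤ (N:ℝ) * S k - η'*((N:ℝ)*Fs k) + (N:ℝ)^K * EN := le_of_le_of_eq h4 h5
  -- telescoping
  have htel : ∀ k, k ≤ K → η' * ∑ j ∈ Finset.range k, ((N:ℝ) * Fs j)
      ≤ (N:ℝ)*S 0 - (N:ℝ)*S k + (k:ℝ)*((N:ℝ)^K * EN) := by
    intro k
    induction k with
    | zero => simp
    | succ n ih =>
        intro hk
        have hn := ih (by omega)
        have hs := hstep n (by omega)
        rw [Finset.sum_range_succ, mul_add]
        push_cast
        nlinarith [hn, hs]
  have hSK : 0 ≤ S K := Finset.sum_nonneg fun ω _ => by positivity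
  have hS0 : S 0 = (N:ℝ)^K * ‖x0 - xstar‖^2 := by
    have h0 : S 0 = ∑ _ω : Fin K → Fin N, ‖x0 - xstar‖^2 := rfl
    rw [h0, Finset.sum_const, hcard, nsmul_eq_mul, Nat.cast_pow]
  have hkey : η' * ((N:ℝ) * ∑ k ∈ Finset.range K, Fs k)
      ≤ (N:ℝ)*((N:ℝ)^K * ‖x0 - xstar‖^2) + (K:ℝ)*((N:ℝ)^K * EN) := by
    have h1 := htel K le_rfl
    have h2 : ∑ j ∈ Finset.range K, ((N:ℝ) * Fs j)
        = (N:ℝ) * ∑ k ∈ Finset.range K, Fs k := by rw [Finset.mul_sum]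
    rw [h2] at h1
    rw [hS0] at h1
    have h3 : 0 ≤ (N:ℝ) * S K := mul_nonneg hNR.le hSK
    linarith [h1, h3]
  -- Jensen
  have hconvbar : ConvexOn ℝ Set.univ fbar := by
    have h1 := ngn_convexOn_finsum f hconv Finset.univ
    have h2 := h1.smul (c := (N:ℝ)⁻¹) (by positivity)
    have h3 : fbar = fun z => (N:ℝ)⁻¹ • ∑ i, f i z := by
      funext z; rw [hfbar]; rw [smul_eq_mul]
    rw [h3]; exact h2
  have hjensen : ∀ ω : Fin K → Fin N,
      fbar ((K:ℝ)⁻¹ • ∑ k ∈ Finset.range K, T k ω) - fbar xstar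
        ≤ (K:ℝ)⁻¹ * ∑ k ∈ Finset.range K, (fbar (T k ω) - fbar xstar) := by
    intro ω
    have hws : ∑ _k ∈ Finset.range K, (K:ℝ)⁻¹ = 1 := by
      rw [Finset.sum_const, Finset.card_range, nsmul_eq_mul]
      field_simp
    have hmain := hconvbar.map_sum_le (w := fun _ => (K:ℝ)⁻¹) (p := fun k => T k ω)
      (t := Finset.range K) (fun _ _ => by positivity) hws (fun _ _ => Set.mem_univ _)
    rw [← Finset.smul_sum] at hmain
    have h1 : ∑ k ∈ Finset.range K, (K:ℝ)⁻¹ • fbar (T k ω)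
        = (K:ℝ)⁻¹ * ∑ k ∈ Finset.range K, fbar (T k ω) := by
      rw [Finset.mul_sum]
      exact Finset.sum_congr rfl fun k _ => by rw [smul_eq_mul]
    rw [h1] at hmain
    have h2 : (K:ℝ)⁻¹ * ∑ k ∈ Finset.range K, (fbar (T k ω) - fbar xstar)
        = (K:ℝ)⁻¹ * (∑ k ∈ Finset.range K, fbar (T k ω)) - fbar xstar := by
      rw [Finset.sum_sub_distrib, Finset.sum_const, Finset.card_range, nsmul_eq_mul,
        mul_sub]
      have : (K:ℝ)⁻¹ * ((K:ℝ) * fbar xstar) = fbar xstar := by field_simp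
      rw [this]
    rw [h2]
    linarith [hmain]
  -- assemble
  have hsw : ∑ ω : Fin K → Fin N, ∑ k ∈ Finset.range K, (fbar (T k ω) - fbar xstar)
      = ∑ k ∈ Finset.range K, Fs k := Finset.sum_comm
  have hstep6 : (1 / (N:ℝ)^K) * ∑ ω : Fin K → Fin N,
        (fbar ((K:ℝ)⁻¹ • ∑ k ∈ Finset.range K, T k ω) - fbar xstar)
      ≤ (1 / (N:ℝ)^K) * ((K:ℝ)⁻¹ * ∑ k ∈ Finset.range K, Fs k) := by
    apply mul_le_mul_of_nonneg_left _ (by positivity)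
    calc ∑ ω : Fin K → Fin N, (fbar ((K:ℝ)⁻¹ • ∑ k ∈ Finset.range K, T k ω) - fbar xstar)
        ≤ ∑ ω : Fin K → Fin N, (K:ℝ)⁻¹ * ∑ k ∈ Finset.range K, (fbar (T k ω) - fbar xstar) :=
          Finset.sum_le_sum fun ω _ => hjensen ω
      _ = (K:ℝ)⁻¹ * ∑ k ∈ Finset.range K, Fs k := by
          rw [← Finset.mul_sum, hsw]
  have hfin : (1 / (N:ℝ)^K) * ((K:ℝ)⁻¹ * ∑ k ∈ Finset.range K, Fs k)
      ≤ ‖x0 - xstar‖^2/(η'*(K:ℝ)) + (3*(σ*L)*(1+σ*L))*((N:ℝ)⁻¹*A) + cc*((N:ℝ)⁻¹*M) := by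
    have e1 : (1 / (N:ℝ)^K) * ((K:ℝ)⁻¹ * ∑ k ∈ Finset.range K, Fs k)
        = (η' * ((N:ℝ) * ∑ k ∈ Finset.range K, Fs k)) / (η'*(N:ℝ)*(N:ℝ)^K*(K:ℝ)) := by
      field_simp
    have e2 : ‖x0 - xstar‖^2/(η'*(K:ℝ)) + (3*(σ*L)*(1+σ*L))*((N:ℝ)⁻¹*A) + cc*((N:ℝ)⁻¹*M)
        = ((N:ℝ)*((N:ℝ)^K * ‖x0 - xstar‖^2) + (K:ℝ)*((N:ℝ)^K * EN))
            / (η'*(N:ℝ)*(N:ℝ)^K*(K:ℝ)) := by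
      rw [hEN]; field_simp; ring
    rw [e1, e2]
    have hden : (0:ℝ) < η'*(N:ℝ)*(N:ℝ)^K*(K:ℝ) := by positivity
    exact div_le_div_of_nonneg_right hkey hden.le
  calc (1 / (N:ℝ)^K) * ∑ ω : Fin K → Fin N,
        (fbar ((K:ℝ)⁻¹ • ∑ k ∈ Finset.range K, ngnTraj f (fun _ => σ) x0 (extendSeq hN ω) k)
          - fbar xstar)
      ≤ (1 / (N:ℝ)^K) * ((K:ℝ)⁻¹ * ∑ k ∈ Finset.range K, Fs k) := hstep6
    _ ≤ ‖x0 - xstar‖^2/(η'*(K:ℝ)) + (3*(σ*L)*(1+σ*L))*((N:ℝ)⁻¹*A) + cc*((N:ℝ)⁻¹*M) := hfin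
    _ ≤ ‖x0 - xstar‖ ^ 2 / (2 * σ / (1 + 2 * σ * L) ^ 2 * (K:ℝ))
        + 3 * σ * L * (1 + σ * L) * ((N : ℝ)⁻¹ * ∑ i, (f i xstar - ⨅ y, f i y))
        + σ * L * max 0 (2 * σ * L - 1) * ((N : ℝ)⁻¹ * ∑ i, ⨅ y, f i y) := by
      have hA' : (N:ℝ)⁻¹ * ∑ i, (f i xstar - ⨅ y, f i y) = (N:ℝ)⁻¹ * A := by rw [hA, hm]
      have hM' : (N:ℝ)⁻¹ * ∑ i, ⨅ y, f i y = (N:ℝ)⁻¹ * M := by rw [hM, hm]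
      rw [hA', hM']
      have hd : ‖x0 - xstar‖^2/(η'*(K:ℝ))
          ≤ ‖x0 - xstar‖ ^ 2 / (2 * σ / (1 + 2 * σ * L) ^ 2 * (K:ℝ)) := by
        apply div_le_div_of_nonneg_left (by positivity) (by positivity)
        have : 2 * σ / (1 + 2*σ*L)^2 ≤ η' := by
          rw [hη']
          apply div_le_div_of_nonneg_left (by positivity) (by positivity)
          nlinarith [mul_pos hσ hL]
        exact mul_le_mul_of_nonneg_right this hKR.le
      have he : (3*(σ*L)*(1+σ*L))*((N:ℝ)⁻¹*A) = 3 * σ * L * (1 + σ * L) * ((N:ℝ)⁻¹ * A) := by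
        ring
      have he2 : cc*((N:ℝ)⁻¹*M) = σ * L * max 0 (2 * σ * L - 1) * ((N:ℝ)⁻¹ * M) := by
        rw [hcc]
      linarith [hd, he.le, he2.le]
end
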